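/- Suppose that for a random variable Y and thresholds t = t_n → ∞, truncation points T = T_n → ∞ with t_n < T_n, we have P(Y > T_n)/P(Y > t_n) → L where L = (1+ξκ)^{−1/ξ} ∈ (0,1), and for every x with 1+ξx > 0 the excess convergence P(Y > t_n + x σ_{t_n})/P(Y > t_n) → (1+ξx)^{−1/ξ} holds. Then for every x ∈ (0, κ), the truncated excess probability P(X_n > t_n + x σ_{t_n} | X_n > t_n), with X_n distributed as Y | Y < T_n, converges to ((1+ξx)^{−1/ξ} − (1+ξκ)^{−1/ξ}) / (1 − (1+ξκ)^{−1/ξ}). -/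

import Mathlib

/-!
Dividing numerator and denominator by `S (t n)` writes the truncated excess probability as
`(S (t n + x * σ n) / S (t n) - S (T n) / S (t n)) / (1 - S (T n) / S (t n))`, a continuous
function of the two ratios whose limits are given; the limiting denominator `1 - GPDtail ξ κ`
is nonzero.
-/

open Filter

/-- `H ξ x = (1+ξx)^(-1/ξ)`, read as `exp (-x)` when `ξ = 0`. -/
noncomputable def GPDtail (ξ x : ℝ) : ℝ :=
  if ξ = 0 then Real.exp (-x) else (1 + ξ * x) ^ (-1 / ξ)

lemma one_add_mul_pos_of_mem_Icc {ξ κ x : ℝ} (hκ : 0 < 1 + ξ * κ) (hx : x ∈ Set.Icc 0 κ) :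
    0 < 1 + ξ * x := by
  obtain ⟨hx0, hxκ⟩ := hx
  rcases le_or_gt 0 ξ with hξ | hξ
  · nlinarith
  · nlinarith

lemma tendsto_sub_div_sub_of_tendsto_div {ι : Type*} {l : Filter ι} {a b c : ι → ℝ} {A B : ℝ}
    (hc : ∀ᶠ n in l, c n ≠ 0) (ha : Tendsto (fun n => a n / c n) l (nhds A))
    (hb : Tendsto (fun n => b n / c n) l (nhds B)) (hB : B ≠ 1) :
    Tendsto (fun n => (a n - b n) / (c n - b n)) l (nhds ((A - B) / (1 - B))) := by
  have hlim : Tendsto (fun n => (a n / c n - b n / c n) / (1 - b n / c n)) l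
      (nhds ((A - B) / (1 - B))) :=
    (ha.sub hb).div (tendsto_const_nhds.sub hb) (sub_ne_zero.mpr hB.symm)
  refine hlim.congr' ?_
  filter_upwards [hc] with n hcn
  rw [div_sub_div_same, one_sub_div hcn, div_div_div_cancel_right₀ hcn]

theorem rough_truncation_limit_general
    (ξ κ : ℝ) (hκξ : 1 + ξ * κ > 0)
    (S : ℝ → ℝ)                                -- S y = P(Y > y)
    (t T σ : ℕ → ℝ)
    (hSt : ∀ n, 0 < S (t n))
    (hHlt : GPDtail ξ κ < 1)
    (hL : Tendsto (fun n => S (T n) / S (t n)) atTop (nhds (GPDtail ξ κ)))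
    (hGPD : ∀ x : ℝ, 1 + ξ * x > 0 →
      Tendsto (fun n => S (t n + x * σ n) / S (t n)) atTop (nhds (GPDtail ξ x))) :
    ∀ x ∈ Set.Ioo 0 κ,
      Tendsto (fun n => (S (t n + x * σ n) - S (T n)) / (S (t n) - S (T n))) atTop
        (nhds ((GPDtail ξ x - GPDtail ξ κ) / (1 - GPDtail ξ κ))) := by
  intro x hx
  have hξx : 1 + ξ * x > 0 := one_add_mul_pos_of_mem_Icc hκξ (Set.Ioo_subset_Icc_self hx)
  exact tendsto_sub_div_sub_of_tendsto_div (Eventually.of_forall fun n => (hSt n).ne')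
    (hGPD x hξx) hL hHlt.ne

/-- rough truncation: if `P(Y > T_n)/P(Y > t_n) → (1+ξκ)^(-1/ξ) ∈ (0,1)`
and the excesses satisfy the GPD limit, then for `x ∈ (0,κ)` the truncated excess
probability `(S(t_n + xσ_n) - S(T_n))/(S(t_n) - S(T_n))` converges to
`((1+ξx)^(-1/ξ) - (1+ξκ)^(-1/ξ))/(1 - (1+ξκ)^(-1/ξ))`. -/
theorem rough_truncation_limit
    (ξ κ : ℝ) (hξ : -1/2 < ξ) (hκ : 0 < κ) (hκξ : 1 + ξ * κ > 0)
    (S : ℝ → ℝ)                                -- S y = P(Y > y)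
    (t T σ : ℕ → ℝ) (ht : ∀ n, t n < T n)
    (hσ : ∀ n, 0 < σ n)
    (hSt : ∀ n, 0 < S (t n))
    (htinf : Tendsto t atTop atTop) (hTinf : Tendsto T atTop atTop)
    (hHpos : 0 < GPDtail ξ κ) (hHlt : GPDtail ξ κ < 1)
    (hL : Tendsto (fun n => S (T n) / S (t n)) atTop (nhds (GPDtail ξ κ)))
    (hGPD : ∀ x : ℝ, 1 + ξ * x > 0 →
      Tendsto (fun n => S (t n + x * σ n) / S (t n)) atTop (nhds (GPDtail ξ x))) :
    ∀ x ∈ Set.Ioo 0 κ,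
      Tendsto (fun n => (S (t n + x * σ n) - S (T n)) / (S (t n) - S (T n))) atTop
        (nhds ((GPDtail ξ x - GPDtail ξ κ) / (1 - GPDtail ξ κ))) :=
  rough_truncation_limit_general ξ κ hκξ S t T σ hSt hHlt hL hGPD
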